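/- Let a : ℕ → ℝ be a bounded sequence whose Birkhoff averages B_n diverge, with α_{-1} = liminf a_n, β_{-1} = limsup a_n, α_0 = liminf B_n, β_0 = limsup B_n. If there exists 1 < D < ∞ such that limsup_{j→∞} t_{j+1}(ε) / t_j(ε) ≤ D for all sufficiently small ε > 0, then β_0 − α_0 ≤ ((D − 1)/(D + 1)) (β_{-1} − α_{-1}). -/

import Mathlib

/-!
Fix a small `ε > 0` and the crossing times `tⱼ`. Along a downcrossing `t₂ₖ → t₂ₖ₊₁` the average
falls from above `β₀ - ε` to below `α₀ + ε`, while for large `k` every term in between is at least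
`α₋₁ - ε`; comparing the sums `n Bₙ` at the two ends gives
`t₂ₖ (β₀ - α₋₁) ≤ t₂ₖ₊₁ (α₀ - α₋₁ + 2ε)`. So the ratio `tⱼ₊₁ / tⱼ` is infinitely often at least
`(β₀ - α₋₁) / (α₀ - α₋₁ + 2ε)`, and letting `ε → 0` yields `β₀ - α₋₁ ≤ D (α₀ - α₋₁)`. Upcrossings
give `β₋₁ - α₀ ≤ D (β₋₁ - β₀)` in the same way, and adding the two inequalities is the claim.
The Cesàro bounds `α₋₁ ≤ α₀` and `β₀ ≤ β₋₁` keep the denominators positive.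
-/

open Filter Topology

/-- Birkhoff averages: `birk a n = (1/n) * ∑_{i=0}^{n-1} a i` (junk value `0` at `n = 0`). -/
noncomputable def birk (a : ℕ → ℝ) (n : ℕ) : ℝ := (∑ i ∈ Finset.range n, a i) / n

/-- Crossing times of a sequence `B` between levels `α + ε` and `β - ε`, 0-indexed:
`crossTimes B α β ε 0` is the first `n ≥ 1` with `B n > β - ε`, and given `t_j`,
`t_{j+1}` is the least `n > t_j` with `B n < α + ε` (resp. `B n > β - ε`) for `j` even
(resp. odd).  (With 1-based indexing as in the paper: odd indices are above `β - ε`,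
even indices below `α + ε`.) -/
noncomputable def crossTimes (B : ℕ → ℝ) (α β ε : ℝ) : ℕ → ℕ
  | 0 => sInf {n | 1 ≤ n ∧ β - ε < B n}
  | j+1 => sInf {n | crossTimes B α β ε j < n ∧
      if j % 2 = 0 then B n < α + ε else β - ε < B n}

theorem isBoundedUnder_of_abs_le {ι : Type*} {f : Filter ι} {u : ι → ℝ} {C : ℝ}
    (h : ∀ i, |u i| ≤ C) :
    IsBoundedUnder (· ≤ ·) f u ∧ IsBoundedUnder (· ≥ ·) f u :=
  isBoundedUnder_le_abs.1 (isBoundedUnder_of ⟨C, h⟩)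

theorem limsup_neg_eq_neg_liminf {ι : Type*} {f : Filter ι} [f.NeBot] {u : ι → ℝ}
    (h_le : IsBoundedUnder (· ≤ ·) f u) (h_ge : IsBoundedUnder (· ≥ ·) f u) :
    limsup (-u) f = -liminf u f :=
  (Antitone.map_liminf_of_continuousAt (f := Neg.neg) (fun _ _ h => neg_le_neg h) u
    continuous_neg.continuousAt h_le.isCoboundedUnder_ge h_ge).symm

section Birkhoff

variable {a : ℕ → ℝ}

theorem birk_neg (a : ℕ → ℝ) : birk (-a) = -birk a := by
  ext n
  simp [birk, Finset.sum_neg_distrib, neg_div]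

theorem sum_range_eq_mul_birk (a : ℕ → ℝ) (n : ℕ) :
    ∑ i ∈ Finset.range n, a i = n * birk a n := by
  rcases Nat.eq_zero_or_pos n with rfl | hn
  · simp
  · rw [birk, mul_div_cancel₀ _ (by positivity)]

theorem abs_birk_le {C : ℝ} (h : ∀ n, |a n| ≤ C) (n : ℕ) : |birk a n| ≤ C := by
  rcases Nat.eq_zero_or_pos n with rfl | hn
  · simpa [birk] using (abs_nonneg (a 0)).trans (h 0)
  · have hn' : (0 : ℝ) < n := by exact_mod_cast hn
    rw [birk, abs_div, Nat.abs_cast, div_le_iff₀ hn']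
    calc |∑ i ∈ Finset.range n, a i| ≤ ∑ i ∈ Finset.range n, |a i| :=
          Finset.abs_sum_le_sum_abs _ _
      _ ≤ ∑ _i ∈ Finset.range n, C := Finset.sum_le_sum fun i _ => h i
      _ = C * n := by simp [mul_comm]

theorem mul_birk_add_le {p q : ℕ} (hpq : p ≤ q) {c : ℝ} (hc : ∀ i ∈ Finset.Ico p q, c ≤ a i) :
    p * birk a p + (q - p) * c ≤ q * birk a q := by
  have hwindow : ∑ _i ∈ Finset.Ico p q, c ≤ ∑ i ∈ Finset.Ico p q, a i := Finset.sum_le_sum hc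
  rw [Finset.sum_const, Nat.card_Ico, nsmul_eq_mul, Nat.cast_sub hpq] at hwindow
  linarith [Finset.sum_range_add_sum_Ico a hpq, sum_range_eq_mul_birk a p,
    sum_range_eq_mul_birk a q]

theorem mul_birk_le_add {p q : ℕ} (hpq : p ≤ q) {c : ℝ} (hc : ∀ i ∈ Finset.Ico p q, a i ≤ c) :
    q * birk a q ≤ p * birk a p + (q - p) * c := by
  have := mul_birk_add_le (a := -a) hpq (c := -c) fun i hi => neg_le_neg (hc i hi)
  simp only [birk_neg, Pi.neg_apply] at this
  linarith

theorem mul_sub_le_of_birk_cross_down {p q : ℕ} (hpq : p ≤ q) {c u l : ℝ}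
    (hc : ∀ i ∈ Finset.Ico p q, c ≤ a i) (hp : u ≤ birk a p) (hq : birk a q ≤ l) :
    (u - c) * p ≤ (l - c) * q := by
  have := mul_birk_add_le hpq hc
  nlinarith [mul_le_mul_of_nonneg_left hp (Nat.cast_nonneg (α := ℝ) p),
    mul_le_mul_of_nonneg_left hq (Nat.cast_nonneg (α := ℝ) q)]

theorem mul_sub_le_of_birk_cross_up {p q : ℕ} (hpq : p ≤ q) {c u l : ℝ}
    (hc : ∀ i ∈ Finset.Ico p q, a i ≤ c) (hp : birk a p ≤ l) (hq : u ≤ birk a q) :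
    (c - l) * p ≤ (c - u) * q := by
  have := mul_sub_le_of_birk_cross_down (a := -a) hpq (c := -c) (u := -l) (l := -u)
    (fun i hi => neg_le_neg (hc i hi)) (by simpa [birk_neg]) (by simpa [birk_neg])
  linarith

theorem limsup_birk_le_limsup {C : ℝ} (h : ∀ n, |a n| ≤ C) :
    limsup (birk a) atTop ≤ limsup a atTop := by
  obtain ⟨ha_le, -⟩ := isBoundedUnder_of_abs_le (f := atTop) h
  obtain ⟨-, hB_ge⟩ := isBoundedUnder_of_abs_le (f := atTop) (abs_birk_le h)
  refine le_of_forall_gt_imp_ge_of_dense fun c hc => ?_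
  obtain ⟨N, hN⟩ := eventually_atTop.1 (eventually_lt_of_limsup_lt hc ha_le)
  have hbound : ∀ᶠ n in atTop, birk a n ≤ c + N * (birk a N - c) / n := by
    filter_upwards [eventually_ge_atTop (max N 1)] with n hn
    have hn0 : (0 : ℝ) < n := by exact_mod_cast (le_max_right N 1).trans hn
    have := mul_birk_le_add ((le_max_left N 1).trans hn) (c := c)
      fun i hi => (hN i (Finset.mem_Ico.1 hi).1).le
    rw [add_div' _ _ _ hn0.ne', le_div_iff₀ hn0]
    linarith
  have hlim : Tendsto (fun n : ℕ => c + N * (birk a N - c) / n) atTop (𝓝 c) := by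
    simpa using
      tendsto_const_nhds.add (tendsto_const_div_atTop_nhds_zero_nat (N * (birk a N - c)))
  calc limsup (birk a) atTop ≤ limsup (fun n : ℕ => c + N * (birk a N - c) / n) atTop :=
        limsup_le_limsup hbound hB_ge.isCoboundedUnder_le hlim.isBoundedUnder_le
    _ = c := hlim.limsup_eq

theorem liminf_le_liminf_birk {C : ℝ} (h : ∀ n, |a n| ≤ C) :
    liminf a atTop ≤ liminf (birk a) atTop := by
  have hneg := limsup_birk_le_limsup (a := -a) (C := C) (by simpa using h)
  obtain ⟨ha_le, ha_ge⟩ := isBoundedUnder_of_abs_le (f := atTop) h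
  obtain ⟨hB_le, hB_ge⟩ := isBoundedUnder_of_abs_le (f := atTop) (abs_birk_le h)
  rw [birk_neg, limsup_neg_eq_neg_liminf hB_le hB_ge, limsup_neg_eq_neg_liminf ha_le ha_ge]
    at hneg
  exact neg_le_neg_iff.1 hneg

end Birkhoff

section CrossTimes

variable {B : ℕ → ℝ} {α β ε : ℝ}

theorem crossTimes_zero_spec (hup : ∃ᶠ n in atTop, β - ε < B n) :
    1 ≤ crossTimes B α β ε 0 ∧ β - ε < B (crossTimes B α β ε 0) := by
  obtain ⟨n, hn1, hn⟩ := frequently_atTop.1 hup 1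
  exact Nat.sInf_mem (s := {n | 1 ≤ n ∧ β - ε < B n}) ⟨n, hn1, hn⟩

theorem crossTimes_succ_spec (hup : ∃ᶠ n in atTop, β - ε < B n)
    (hdown : ∃ᶠ n in atTop, B n < α + ε) (j : ℕ) :
    crossTimes B α β ε j < crossTimes B α β ε (j + 1) ∧
      if j % 2 = 0 then B (crossTimes B α β ε (j + 1)) < α + ε
      else β - ε < B (crossTimes B α β ε (j + 1)) := by
  refine Nat.sInf_mem (s := {n | crossTimes B α β ε j < n ∧
    if j % 2 = 0 then B n < α + ε else β - ε < B n}) ?_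
  split_ifs
  · obtain ⟨n, hn, hBn⟩ := frequently_atTop.1 hdown (crossTimes B α β ε j + 1)
    exact ⟨n, hn, hBn⟩
  · obtain ⟨n, hn, hBn⟩ := frequently_atTop.1 hup (crossTimes B α β ε j + 1)
    exact ⟨n, hn, hBn⟩

theorem crossTimes_strictMono (hup : ∃ᶠ n in atTop, β - ε < B n)
    (hdown : ∃ᶠ n in atTop, B n < α + ε) : StrictMono (crossTimes B α β ε) :=
  strictMono_nat_of_lt_succ fun j => (crossTimes_succ_spec hup hdown j).1

theorem lt_apply_crossTimes_even (hup : ∃ᶠ n in atTop, β - ε < B n)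
    (hdown : ∃ᶠ n in atTop, B n < α + ε) (k : ℕ) : β - ε < B (crossTimes B α β ε (2 * k)) := by
  cases k with
  | zero => exact (crossTimes_zero_spec hup).2
  | succ k =>
    have h := (crossTimes_succ_spec hup hdown (2 * k + 1)).2
    rwa [if_neg (by omega)] at h

theorem apply_crossTimes_odd_lt (hup : ∃ᶠ n in atTop, β - ε < B n)
    (hdown : ∃ᶠ n in atTop, B n < α + ε) (k : ℕ) :
    B (crossTimes B α β ε (2 * k + 1)) < α + ε := by
  have h := (crossTimes_succ_spec hup hdown (2 * k)).2
  rwa [if_pos (by omega)] at h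

end CrossTimes

theorem le_mul_of_limsup_ratio_le {t : ℕ → ℕ} (ht : StrictMono t) {x y D : ℝ} (hy : 0 < y)
    (hD : limsup (fun j : ℕ => (((t (j + 1) : ℝ) / (t j : ℝ) : ℝ) : EReal)) atTop ≤ (D : EReal))
    (h : ∃ᶠ j in atTop, x * t j ≤ y * t (j + 1)) : x ≤ D * y := by
  have hratio : ∃ᶠ j in atTop,
      ((x / y : ℝ) : EReal) ≤ (((t (j + 1) : ℝ) / (t j : ℝ) : ℝ) : EReal) := by
    refine (h.and_eventually (eventually_gt_atTop 0)).mono fun j ⟨hj, hj0⟩ => ?_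
    have htj : (0 : ℝ) < t j := by exact_mod_cast hj0.trans_le ht.le_apply
    rw [EReal.coe_le_coe_iff, div_le_div_iff₀ hy htj]
    linarith
  rw [← div_le_iff₀ hy, ← EReal.coe_le_coe_iff]
  exact (le_limsup_of_frequently_le hratio).trans hD

section Crossings

variable {a : ℕ → ℝ} {α β ε c : ℝ}

theorem eventually_sub_mul_crossTimes_even_le (hup : ∃ᶠ n in atTop, β - ε < birk a n)
    (hdown : ∃ᶠ n in atTop, birk a n < α + ε) (hc : ∀ᶠ i in atTop, c ≤ a i) :
    ∀ᶠ k in atTop, (β - ε - c) * crossTimes (birk a) α β ε (2 * k) ≤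
      (α + ε - c) * crossTimes (birk a) α β ε (2 * k + 1) := by
  obtain ⟨N, hN⟩ := eventually_atTop.1 hc
  filter_upwards [eventually_ge_atTop N] with k hk
  have ht := crossTimes_strictMono hup hdown
  refine mul_sub_le_of_birk_cross_down (ht (Nat.lt_succ_self _)).le
    (fun i hi => hN i ?_) (lt_apply_crossTimes_even hup hdown k).le
    (apply_crossTimes_odd_lt hup hdown k).le
  exact (hk.trans (by omega)).trans (ht.le_apply.trans (Finset.mem_Ico.1 hi).1)

theorem eventually_sub_mul_crossTimes_odd_le (hup : ∃ᶠ n in atTop, β - ε < birk a n)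
    (hdown : ∃ᶠ n in atTop, birk a n < α + ε) (hc : ∀ᶠ i in atTop, a i ≤ c) :
    ∀ᶠ k in atTop, (c - (α + ε)) * crossTimes (birk a) α β ε (2 * k + 1) ≤
      (c - (β - ε)) * crossTimes (birk a) α β ε (2 * k + 1 + 1) := by
  obtain ⟨N, hN⟩ := eventually_atTop.1 hc
  filter_upwards [eventually_ge_atTop N] with k hk
  have ht := crossTimes_strictMono hup hdown
  refine mul_sub_le_of_birk_cross_up (ht (Nat.lt_succ_self _)).le
    (fun i hi => hN i ?_) (apply_crossTimes_odd_lt hup hdown k).le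
    (lt_apply_crossTimes_even hup hdown (k + 1)).le
  exact (hk.trans (by omega)).trans (ht.le_apply.trans (Finset.mem_Ico.1 hi).1)

end Crossings

section Contraction

variable {a : ℕ → ℝ} {C D ε : ℝ}

theorem limsup_birk_sub_liminf_le (hC : ∀ n, |a n| ≤ C) (hε : 0 < ε)
    (hD : limsup (fun j : ℕ =>
        (((crossTimes (birk a) (liminf (birk a) atTop) (limsup (birk a) atTop) ε (j + 1) : ℝ) /
          (crossTimes (birk a) (liminf (birk a) atTop) (limsup (birk a) atTop) ε j : ℝ) : ℝ) : EReal))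
        atTop ≤ (D : EReal)) :
    limsup (birk a) atTop - liminf a atTop ≤
      D * (liminf (birk a) atTop - liminf a atTop + 2 * ε) := by
  obtain ⟨-, ha_ge⟩ := isBoundedUnder_of_abs_le (f := atTop) hC
  obtain ⟨hB_le, hB_ge⟩ := isBoundedUnder_of_abs_le (f := atTop) (abs_birk_le hC)
  have hup : ∃ᶠ n in atTop, limsup (birk a) atTop - ε < birk a n :=
    frequently_lt_of_lt_limsup hB_ge.isCoboundedUnder_le (by linarith)
  have hdown : ∃ᶠ n in atTop, birk a n < liminf (birk a) atTop + ε :=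
    frequently_lt_of_liminf_lt hB_le.isCoboundedUnder_ge (by linarith)
  have hlow : ∀ᶠ i in atTop, liminf a atTop - ε ≤ a i :=
    (eventually_lt_of_lt_liminf (by linarith) ha_ge).mono fun _ h => h.le
  refine le_mul_of_limsup_ratio_le (crossTimes_strictMono hup hdown)
    (by linarith [liminf_le_liminf_birk hC]) hD ?_
  have hdouble : Tendsto (fun k : ℕ => 2 * k) atTop atTop := tendsto_id.const_mul_atTop' two_pos
  exact hdouble.frequently <|
    (eventually_sub_mul_crossTimes_even_le hup hdown hlow).frequently.mono fun k hk => by linarith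

theorem limsup_sub_liminf_birk_le (hC : ∀ n, |a n| ≤ C) (hε : 0 < ε)
    (hD : limsup (fun j : ℕ =>
        (((crossTimes (birk a) (liminf (birk a) atTop) (limsup (birk a) atTop) ε (j + 1) : ℝ) /
          (crossTimes (birk a) (liminf (birk a) atTop) (limsup (birk a) atTop) ε j : ℝ) : ℝ) : EReal))
        atTop ≤ (D : EReal)) :
    limsup a atTop - liminf (birk a) atTop ≤
      D * (limsup a atTop - limsup (birk a) atTop + 2 * ε) := by
  obtain ⟨ha_le, -⟩ := isBoundedUnder_of_abs_le (f := atTop) hC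
  obtain ⟨hB_le, hB_ge⟩ := isBoundedUnder_of_abs_le (f := atTop) (abs_birk_le hC)
  have hup : ∃ᶠ n in atTop, limsup (birk a) atTop - ε < birk a n :=
    frequently_lt_of_lt_limsup hB_ge.isCoboundedUnder_le (by linarith)
  have hdown : ∃ᶠ n in atTop, birk a n < liminf (birk a) atTop + ε :=
    frequently_lt_of_liminf_lt hB_le.isCoboundedUnder_ge (by linarith)
  have hhigh : ∀ᶠ i in atTop, a i ≤ limsup a atTop + ε :=
    (eventually_lt_of_limsup_lt (by linarith) ha_le).mono fun _ h => h.le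
  refine le_mul_of_limsup_ratio_le (crossTimes_strictMono hup hdown)
    (by linarith [limsup_birk_le_limsup hC]) hD ?_
  have hodd : Tendsto (fun k : ℕ => 2 * k + 1) atTop atTop :=
    (tendsto_add_atTop_nat 1).comp (tendsto_id.const_mul_atTop' two_pos)
  exact hodd.frequently <|
    (eventually_sub_mul_crossTimes_odd_le hup hdown hhigh).frequently.mono fun k hk => by linarith

end Contraction

theorem le_mul_of_eventually_le_mul_add {x y D : ℝ}
    (h : ∀ᶠ ε in 𝓝[>] (0 : ℝ), x ≤ D * (y + 2 * ε)) : x ≤ D * y := by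
  have hlim : Tendsto (fun ε : ℝ => D * (y + 2 * ε)) (𝓝 0) (𝓝 (D * y)) :=
    (by fun_prop : Continuous fun ε : ℝ => D * (y + 2 * ε)).tendsto' 0 _ (by simp)
  exact ge_of_tendsto (hlim.mono_left nhdsWithin_le_nhds) h

theorem contraction_of_bounded_crossing_ratios_general (a : ℕ → ℝ)
    (hbdd : ∃ C : ℝ, ∀ n, |a n| ≤ C)
    (D : ℝ) (hD : 1 < D)
    (hratio : ∃ ε₀ : ℝ, 0 < ε₀ ∧ ∀ ε : ℝ, 0 < ε → ε < ε₀ →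
      limsup (fun j : ℕ =>
        (((crossTimes (birk a) (liminf (birk a) atTop) (limsup (birk a) atTop) ε (j + 1) : ℝ) /
          (crossTimes (birk a) (liminf (birk a) atTop) (limsup (birk a) atTop) ε j : ℝ) : ℝ) : EReal))
        atTop ≤ (D : EReal)) :
    limsup (birk a) atTop - liminf (birk a) atTop ≤
      (D - 1) / (D + 1) * (limsup a atTop - liminf a atTop) := by
  obtain ⟨C, hC⟩ := hbdd
  obtain ⟨ε₀, hε₀, hratio⟩ := hratio
  have hdown : limsup (birk a) atTop - liminf a atTop ≤
      D * (liminf (birk a) atTop - liminf a atTop) :=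
    le_mul_of_eventually_le_mul_add <| by
      filter_upwards [Ioo_mem_nhdsGT hε₀] with ε hε
      exact limsup_birk_sub_liminf_le hC hε.1 (hratio ε hε.1 hε.2)
  have hup : limsup a atTop - liminf (birk a) atTop ≤
      D * (limsup a atTop - limsup (birk a) atTop) :=
    le_mul_of_eventually_le_mul_add <| by
      filter_upwards [Ioo_mem_nhdsGT hε₀] with ε hε
      exact limsup_sub_liminf_birk_le hC hε.1 (hratio ε hε.1 hε.2)
  rw [div_mul_eq_mul_div, le_div_iff₀ (by linarith)]
  linarith

/-- **Proposition 2.**  Let `a` be bounded with divergent Birkhoff averages `B_n`,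
and write `α₋₁ = liminf a`, `β₋₁ = limsup a`, `α₀ = liminf B`, `β₀ = limsup B`.
If there is `1 < D < ∞` with `limsup_j t_{j+1}(ε)/t_j(ε) ≤ D` for all sufficiently
small `ε > 0`, then `β₀ - α₀ ≤ ((D - 1)/(D + 1)) (β₋₁ - α₋₁)`. -/
theorem contraction_of_bounded_crossing_ratios (a : ℕ → ℝ)
    (hbdd : ∃ C : ℝ, ∀ n, |a n| ≤ C)
    (hdiv : ¬ ∃ L : ℝ, Tendsto (birk a) atTop (𝓝 L))
    (D : ℝ) (hD : 1 < D)
    (hratio : ∃ ε₀ : ℝ, 0 < ε₀ ∧ ∀ ε : ℝ, 0 < ε → ε < ε₀ →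
      limsup (fun j : ℕ =>
        (((crossTimes (birk a) (liminf (birk a) atTop) (limsup (birk a) atTop) ε (j + 1) : ℝ) /
          (crossTimes (birk a) (liminf (birk a) atTop) (limsup (birk a) atTop) ε j : ℝ) : ℝ) : EReal))
        atTop ≤ (D : EReal)) :
    limsup (birk a) atTop - liminf (birk a) atTop ≤
      (D - 1) / (D + 1) * (limsup a atTop - liminf a atTop) :=
  contraction_of_bounded_crossing_ratios_general a hbdd D hD hratio
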